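/- arXiv:2503.11765 — 4 statements merged into one kernel-verified Lean document; each statement's English description precedes it below -/
import Mathlib

section
/- Let F be a finite field of characteristic p, and let n > k > 0 be integers such that p divides n·k but p does not divide n + k. Then for any nonzero a, b ∈ F, the trinomial x^n + a·x^k + b is squarefree in F[x]. -/
open Polynomial

theorem stmt_0 (F : Type*) [Field F] [Fintype F] (p : ℕ) [Fact p.Prime] [CharP F p]
    (n k : ℕ) (hk : 0 < k) (hkn : k < n) (hdvd : p ∣ n * k) (hndvd : ¬ p ∣ (n + k))
    (a b : F) (ha : a ≠ 0) (hb : b ≠ 0) :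
    Squarefree (X ^ n + C a * X ^ k + C b) := by
  set f : F[X] := X ^ n + C a * X ^ k + C b with hf
  have hn : 0 < n := hk.trans hkn
  -- f is coprime with X
  have hcoeff : f.coeff 0 = b := by
    simp [hf, coeff_X_pow, Ne.symm hn.ne', Ne.symm hk.ne']
  have hXf : IsCoprime f X := by
    rw [isCoprime_comm, Polynomial.prime_X.coprime_iff_not_dvd, X_dvd_iff, hcoeff]
    exact hb
  have hXmf : ∀ m : ℕ, IsCoprime f (X ^ m) := fun m => hXf.pow_right
  apply Polynomial.Separable.squarefree
  unfold Polynomial.Separable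
  have hderiv : derivative f =
      C ((n : F)) * X ^ (n - 1) + C (a * (k : F)) * X ^ (k - 1) := by
    simp only [hf, derivative_add, derivative_C, derivative_X_pow, derivative_C_mul, add_zero, map_mul]
    ring
  rcases (Fact.out : p.Prime).dvd_mul.mp hdvd with hpn | hpk
  · have hk0 : (k : F) ≠ 0 := by
      rw [Ne, CharP.cast_eq_zero_iff F p]
      intro hpk
      exact hndvd (Nat.dvd_add hpn hpk)
    have hn0 : (n : F) = 0 := (CharP.cast_eq_zero_iff F p n).mpr hpn
    rw [hderiv, hn0, map_zero, zero_mul, zero_add]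
    exact (isCoprime_mul_unit_left_right ((isUnit_C.mpr (mul_ne_zero ha hk0).isUnit)) _ _).mpr
      (hXmf _)
  · have hn0 : (n : F) ≠ 0 := by
      rw [Ne, CharP.cast_eq_zero_iff F p]
      intro hpn
      exact hndvd (Nat.dvd_add hpn hpk)
    have hk0 : (k : F) = 0 := (CharP.cast_eq_zero_iff F p k).mpr hpk
    rw [hderiv, hk0, mul_zero, map_zero, zero_mul, add_zero]
    exact (isCoprime_mul_unit_left_right ((isUnit_C.mpr hn0.isUnit)) _ _).mpr (hXmf _)
end

section
/- Let R be a commutative ring and n > 1. For N > 1, the greatest common divisor of the binomial coefficients C(N,1), C(N,2), …, C(N,N−1) equals 1 if N is not a prime power, and equals p if N = p^m is a power of a prime p. -/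
lemma Nat.Prime.minFac_pow {p m : ℕ} (hp : p.Prime) (hm : m ≠ 0) : (p ^ m).minFac = p := by
  have hq : (p ^ m).minFac.Prime := Nat.minFac_prime (Nat.one_lt_pow hm hp.one_lt).ne'
  exact (Nat.prime_dvd_prime_iff_eq hq hp).mp (hq.dvd_of_dvd_pow (Nat.minFac_dvd _))

theorem stmt_2 (N : ℕ) (hN : 1 < N) :
    (¬ IsPrimePow N → (Finset.Icc 1 (N - 1)).gcd (fun i => N.choose i) = 1) ∧
    (∀ p m : ℕ, p.Prime → 0 < m → N = p ^ m →
      (Finset.Icc 1 (N - 1)).gcd (fun i => N.choose i) = p) := by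
  refine ⟨Choose.gcd_choose_eq_one_of_not_isPrimePow hN, ?_⟩
  rintro p m hp hm rfl
  exact (Choose.gcd_choose_eq_minFac_of_isPrimePow (hp.isPrimePow.pow hm.ne')).trans
    (hp.minFac_pow hm.ne')
end

section
/- Let R be a finite commutative ring, n > 0, and let a(x) = a_k x^k + a_0, b(x) = b_k x^k + b_0 with 0 < k < n and all coefficients units. If there exists α ∈ Rˣ with b_k·α^(n−k) = a_k and b_0·α^n = a_0, then the map f(x) ↦ f(α x) induces a well-defined R-algebra isomorphism R[x]/⟨x^n − a(x)⟩ → R[x]/⟨x^n − b(x)⟩. -/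
open Polynomial

namespace AdjoinRoot

variable {R : Type*} [CommRing R]

/-- Substituting `α * X` for `X` is an automorphism of `R[X]` (with inverse `X ↦ α⁻¹ * X`); it
carries the ideal `(p)` onto `(p(αX)) = (q)`. -/
noncomputable def compCMulXAlgEquiv (α : Rˣ) (p q : R[X])
    (h : Associated (p.comp (C (α : R) * X)) q) : AdjoinRoot p ≃ₐ[R] AdjoinRoot q :=
  Ideal.quotientEquivAlg _ _
    (algEquivOfCompEqX (C (α : R) * X) (C ((α⁻¹ : Rˣ) : R) * X)
      (by simp [← mul_assoc, ← C_mul]) (by simp [← mul_assoc, ← C_mul]))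
    (by
      obtain ⟨u, rfl⟩ := h
      rw [Ideal.map_span, Set.image_singleton, Ideal.span_singleton_mul_right_unit u.isUnit]
      simp [comp_eq_aeval])

theorem compCMulXAlgEquiv_mk (α : Rˣ) (p q : R[X]) (h : Associated (p.comp (C (α : R) * X)) q)
    (f : R[X]) : compCMulXAlgEquiv α p q h (mk p f) = mk q (f.comp (C (α : R) * X)) := by
  rw [comp_eq_aeval]
  rfl

end AdjoinRoot

theorem Polynomial.X_pow_sub_C_mul_X_pow_add_C_comp_C_mul_X {R : Type*} [CommRing R]
    {n k : ℕ} (hkn : k ≤ n) (a b a' b' c : R) (ha : a' * c ^ (n - k) = a) (hb : b' * c ^ n = b) :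
    (X ^ n - (C a * X ^ k + C b)).comp (C c * X) =
      C (c ^ n) * (X ^ n - (C a' * X ^ k + C b')) := by
  obtain ⟨m, rfl⟩ := Nat.exists_eq_add_of_le hkn
  subst ha hb
  simp only [Nat.add_sub_cancel_left, sub_comp, add_comp, mul_comp, pow_comp, X_comp, C_comp,
    map_mul, map_pow]
  ring

theorem stmt_4_general (R : Type*) [CommRing R] (n k : ℕ)
    (hkn : k < n)
    (a_k a_0 b_k b_0 : R)
    (α : Rˣ) (h1 : b_k * (α : R) ^ (n - k) = a_k) (h2 : b_0 * (α : R) ^ n = a_0) :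
    ∃ φ : AdjoinRoot (X ^ n - (C a_k * X ^ k + C a_0)) ≃ₐ[R]
          AdjoinRoot (X ^ n - (C b_k * X ^ k + C b_0)),
      ∀ f : R[X],
        φ (AdjoinRoot.mk _ f) = AdjoinRoot.mk _ (f.comp (C (α : R) * X)) := by
  have hassoc : Associated ((X ^ n - (C a_k * X ^ k + C a_0)).comp (C (α : R) * X))
      (X ^ n - (C b_k * X ^ k + C b_0)) := by
    rw [X_pow_sub_C_mul_X_pow_add_C_comp_C_mul_X hkn.le _ _ _ _ _ h1 h2]
    exact associated_unit_mul_left _ _ ((α ^ n).isUnit.map C)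
  exact ⟨AdjoinRoot.compCMulXAlgEquiv α _ _ hassoc, AdjoinRoot.compCMulXAlgEquiv_mk α _ _ hassoc⟩

theorem stmt_4 (R : Type*) [CommRing R] [Fintype R] (n k : ℕ) (hn : 0 < n)
    (hk : 0 < k) (hkn : k < n)
    (a_k a_0 b_k b_0 : R) (hak : IsUnit a_k) (ha0 : IsUnit a_0)
    (hbk : IsUnit b_k) (hb0 : IsUnit b_0)
    (α : Rˣ) (h1 : b_k * (α : R) ^ (n - k) = a_k) (h2 : b_0 * (α : R) ^ n = a_0) :
    ∃ φ : AdjoinRoot (X ^ n - (C a_k * X ^ k + C a_0)) ≃ₐ[R]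
          AdjoinRoot (X ^ n - (C b_k * X ^ k + C b_0)),
      ∀ f : R[X],
        φ (AdjoinRoot.mk _ f) = AdjoinRoot.mk _ (f.comp (C (α : R) * X)) :=
  stmt_4_general R n k hkn a_k a_0 b_k b_0 α h1 h2
end

section
/- Let R be a finite commutative local ring with residue field R/m and let f ∈ R[x] be monic such that its reduction mod m is squarefree. If G = {g₀, γ^(λ₁)g₁, …, γ^(λ_u)g_u} with g_i monic of strictly decreasing degrees and the divisibility chain g_u | g_(u−1) | … | g₀ | f holds, then the ideal generated by the images of G in R[x]/⟨f⟩ is generated by the single element ∑_{i=0}^u γ^(λ_i) g_i. -/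
open Polynomial

private lemma sqfree_coprime {K : Type*} [Field K] {a b : K[X]}
    (h : Squarefree (a * b)) : IsCoprime a b := by
  classical
  rw [← EuclideanDomain.gcd_isUnit_iff]
  exact h _ (mul_dvd_mul (EuclideanDomain.gcd_dvd_left a b) (EuclideanDomain.gcd_dvd_right a b))

theorem stmt_18 (R : Type*) [CommRing R] [Fintype R] [IsLocalRing R]
    (γ : R) (hγ : Ideal.span {γ} = IsLocalRing.maximalIdeal R)
    (s : ℕ) (hs : 0 < s) (hγs : γ ^ s = 0) (hγs' : γ ^ (s - 1) ≠ 0)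
    (f : R[X]) (hf : f.Monic)
    (hfsq : Squarefree (f.map (Ideal.Quotient.mk (IsLocalRing.maximalIdeal R))))
    (u : ℕ) (g : Fin (u + 1) → R[X]) (lam : Fin (u + 1) → ℕ)
    (hg : ∀ i, (g i).Monic)
    (hdeg : ∀ i : Fin u, (g i.succ).degree < (g i.castSucc).degree)
    (hchain : ∀ i : Fin u, g i.succ ∣ g i.castSucc)
    (hg0f : g 0 ∣ f)
    (hlam0 : lam 0 = 0)
    (hlammono : ∀ i : Fin u, lam i.castSucc < lam i.succ)
    (hlams : ∀ i, lam i ≤ s - 1) :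
    Ideal.span (Set.range fun i => AdjoinRoot.mk f (C (γ ^ lam i) * g i))
      = Ideal.span {AdjoinRoot.mk f (∑ i, C (γ ^ lam i) * g i)} := by
  classical
  set m := IsLocalRing.maximalIdeal R with hm
  set φ := Ideal.Quotient.mk m with hφ
  haveI : (m : Ideal R).IsMaximal := IsLocalRing.maximalIdeal.isMaximal R
  letI : Field (R ⧸ m) := Ideal.Quotient.field m
  -- ℕ-indexed versions
  set G : ℕ → R[X] := fun n => g ⟨min n u, Nat.lt_succ_of_le (min_le_right n u)⟩ with hG
  set L : ℕ → ℕ := fun n => lam ⟨min n u, Nat.lt_succ_of_le (min_le_right n u)⟩ with hL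
  have hGi' : ∀ (n : ℕ) (hn : n < u + 1), G n = g ⟨n, hn⟩ := by
    intro n hn
    simp only [hG]
    congr 1
    exact Fin.ext (min_eq_left (Nat.lt_succ_iff.mp hn))
  have hLi' : ∀ (n : ℕ) (hn : n < u + 1), L n = lam ⟨n, hn⟩ := by
    intro n hn
    simp only [hL]
    congr 1
    exact Fin.ext (min_eq_left (Nat.lt_succ_iff.mp hn))
  have hGi : ∀ i : Fin (u + 1), G ↑i = g i := fun i => (hGi' ↑i i.isLt).trans (congrArg g (Fin.ext rfl))
  have hLi : ∀ i : Fin (u + 1), L ↑i = lam i := fun i => (hLi' ↑i i.isLt).trans (congrArg lam (Fin.ext rfl))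
  -- adjacent facts
  have adj_dvd : ∀ b : ℕ, ∀ hb : b < u,
      g ⟨b + 1, Nat.succ_lt_succ hb⟩ ∣ g ⟨b, Nat.lt_succ_of_lt hb⟩ := by
    intro b hb
    have := hchain ⟨b, hb⟩
    simpa [Fin.succ, Fin.castSucc, Fin.castAdd, Fin.castLE] using this
  have adj_lt : ∀ b : ℕ, ∀ hb : b < u,
      lam ⟨b, Nat.lt_succ_of_lt hb⟩ < lam ⟨b + 1, Nat.succ_lt_succ hb⟩ := by
    intro b hb
    have := hlammono ⟨b, hb⟩
    simpa [Fin.succ, Fin.castSucc, Fin.castAdd, Fin.castLE] using this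
  -- chain divisibility in ℕ form
  have fin_dvd : ∀ b : ℕ, ∀ hb : b ≤ u, ∀ a : ℕ, ∀ hab : a ≤ b,
      g ⟨b, Nat.lt_succ_of_le hb⟩ ∣ g ⟨a, Nat.lt_succ_of_le (hab.trans hb)⟩ := by
    intro b
    induction b with
    | zero => intro hb a hab; interval_cases a; exact dvd_rfl
    | succ b ih =>
      intro hb a hab
      rcases Nat.lt_succ_iff_lt_or_eq.mp (Nat.lt_succ_of_le hab) with h | h
      · exact dvd_trans (adj_dvd b hb) (ih (Nat.le_of_succ_le hb) a (Nat.lt_succ_iff.mp h))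
      · subst h; exact dvd_rfl
  have fin_lt : ∀ b : ℕ, ∀ hb : b ≤ u, ∀ a : ℕ, ∀ hab : a < b,
      lam ⟨a, Nat.lt_succ_of_le ((Nat.le_of_lt hab).trans hb)⟩ < lam ⟨b, Nat.lt_succ_of_le hb⟩ := by
    intro b
    induction b with
    | zero => intro hb a hab; omega
    | succ b ih =>
      intro hb a hab
      rcases Nat.lt_succ_iff_lt_or_eq.mp hab with h | h
      · exact lt_trans (ih (Nat.le_of_succ_le hb) a h) (adj_lt b hb)
      · subst h; exact adj_lt a (by omega)
  have hGdvd : ∀ a b : ℕ, a ≤ b → G b ∣ G a := by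
    intro a b hab
    simp only [hG]
    exact fin_dvd (min b u) (min_le_right b u) (min a u)
      (le_min (le_trans (min_le_left a u) hab) (min_le_right a u))
  have hGf : ∀ n : ℕ, G n ∣ f := by
    intro n
    refine dvd_trans ?_ hg0f
    have := hGdvd 0 n (Nat.zero_le n)
    rwa [show G 0 = g 0 from hGi 0] at this
  have hL0 : L 0 = 0 := by
    rw [show L 0 = lam 0 from hLi 0]; exact hlam0
  have hLmono : ∀ a b : ℕ, a ≤ b → L a ≤ L b := by
    intro a b hab
    simp only [hL]
    rcases Nat.lt_or_ge (min a u) (min b u) with h | h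
    · exact le_of_lt (fin_lt (min b u) (min_le_right b u) (min a u) h)
    · have heq : min a u = min b u := le_antisymm (le_min (le_trans (min_le_left a u) hab) (min_le_right a u)) (by omega)
      exact le_of_eq (congrArg lam (Fin.ext heq))
  have hLlt : ∀ a b : ℕ, a < b → b ≤ u → L a < L b := by
    intro a b hab hb
    simp only [hL]
    exact fin_lt (min b u) (min_le_right b u) (min a u)
      (by rw [min_eq_left hb, min_eq_left (by omega : a ≤ u)]; exact hab)
  -- h and I
  set h : R[X] := ∑ i ∈ Finset.range (u + 1), C (γ ^ L i) * G i with hh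
  set I : Ideal R[X] := Ideal.span {h, f} with hI
  have hhI : h ∈ I := Ideal.subset_span (by simp)
  have hfI : f ∈ I := Ideal.subset_span (by simp)
  -- Bezout lift
  have bezout : ∀ a b : R[X], IsCoprime (a.map φ) (b.map φ) →
      ∃ p q c : R[X], p * a + q * b = 1 - C γ * c := by
    intro a b ⟨P, Q, hPQ⟩
    obtain ⟨p, hp⟩ := Polynomial.map_surjective φ Ideal.Quotient.mk_surjective P
    obtain ⟨q, hq⟩ := Polynomial.map_surjective φ Ideal.Quotient.mk_surjective Q
    have hz : (1 - (p * a + q * b)) ∈ Ideal.map (C : R →+* R[X]) m := by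
      rw [Ideal.mem_map_C_iff]
      intro n
      rw [← Ideal.Quotient.eq_zero_iff_mem, ← Polynomial.coeff_map]
      rw [Polynomial.map_sub, Polynomial.map_add, Polynomial.map_mul, Polynomial.map_mul,
        hp, hq, Polynomial.map_one, hPQ]
      simp
    rw [← hγ, Ideal.map_span, Set.image_singleton, Ideal.mem_span_singleton] at hz
    obtain ⟨c, hc⟩ := hz
    exact ⟨p, q, c, by linear_combination -hc⟩
  -- unit cancellation
  have unit_cancel : ∀ c x : R[X], x * (1 - C γ * c) ∈ I → x ∈ I := by
    intro c x hx
    have hnil : IsNilpotent (C γ * c) := ⟨s, by rw [mul_pow, ← C_pow, hγs, C_0, zero_mul]⟩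
    obtain ⟨v, hv⟩ := IsUnit.exists_right_inv (IsNilpotent.isUnit_one_sub hnil)
    have : x = x * (1 - C γ * c) * v := by rw [mul_assoc, hv, mul_one]
    rw [this]
    exact Ideal.mul_mem_right _ _ hx
  -- extract a single summand
  have extract : ∀ (τ : ℕ → R[X]) (j : ℕ), j ∈ Finset.range (u + 1) →
      (∑ i ∈ Finset.range (u + 1), τ i) ∈ I →
      (∀ i ∈ (Finset.range (u + 1)).erase j, τ i ∈ I) → τ j ∈ I := by
    intro τ j hj htot herase
    have hsplit := Finset.add_sum_erase (Finset.range (u + 1)) τ hj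
    have : τ j = (∑ i ∈ Finset.range (u + 1), τ i)
        - ∑ i ∈ (Finset.range (u + 1)).erase j, τ i := by
      rw [← hsplit]; ring
    rw [this]
    exact Ideal.sub_mem _ htot (Ideal.sum_mem _ herase)
  -- main lemma
  have main : ∀ n t i₀ : ℕ, i₀ ≤ u → L i₀ ≤ t → s ≤ t + n → C (γ ^ t) * G i₀ ∈ I := by
    intro n
    induction n with
    | zero =>
      intro t i₀ _ _ hst
      obtain ⟨d, hd⟩ := Nat.exists_eq_add_of_le (by omega : s ≤ t)
      rw [hd, pow_add, hγs, zero_mul, C_0, zero_mul]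
      exact Ideal.zero_mem I
    | succ n IH =>
      intro t i₀ hi₀ ht hst
      -- inner chain induction
      have inner : ∀ k : ℕ, k ≤ i₀ →
          C (γ ^ t) * ∏ j ∈ Finset.Ico k (i₀ + 1), G j ∈ I := by
        intro k
        induction k with
        | zero =>
          intro _
          have hid : h * (C (γ ^ t) * ∏ j ∈ Finset.Ico 1 (i₀ + 1), G j)
              = ∑ i ∈ Finset.range (u + 1),
                  C (γ ^ (t + L i)) * (G i * ∏ j ∈ Finset.Ico 1 (i₀ + 1), G j) := by
            rw [hh, Finset.sum_mul]
            refine Finset.sum_congr rfl fun i _ => ?_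
            rw [pow_add, C_mul]; ring
          have habs : ∀ i ∈ (Finset.range (u + 1)).erase 0,
              C (γ ^ (t + L i)) * (G i * ∏ j ∈ Finset.Ico 1 (i₀ + 1), G j) ∈ I := by
            intro i hi
            have hi1 : 1 ≤ i := Nat.one_le_iff_ne_zero.mpr (Finset.ne_of_mem_erase hi)
            have hiu : i ≤ u := Nat.lt_succ_iff.mp (Finset.mem_range.mp (Finset.mem_of_mem_erase hi))
            have hLi1 : 1 ≤ L i := by
              have := hLlt 0 i (by omega) hiu
              omega
            have : C (γ ^ (t + L i)) * G i ∈ I :=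
              IH (t + L i) i hiu (by omega) (by omega)
            have h2 : C (γ ^ (t + L i)) * (G i * ∏ j ∈ Finset.Ico 1 (i₀ + 1), G j)
                = (∏ j ∈ Finset.Ico 1 (i₀ + 1), G j) * (C (γ ^ (t + L i)) * G i) := by ring
            rw [h2]
            exact Ideal.mul_mem_left _ _ this
          have h0mem : (0 : ℕ) ∈ Finset.range (u + 1) := Finset.mem_range.mpr (by omega)
          have := extract _ 0 h0mem (by rw [← hid]; exact Ideal.mul_mem_right _ _ hhI) habs
          have heq : C (γ ^ (t + L 0)) * (G 0 * ∏ j ∈ Finset.Ico 1 (i₀ + 1), G j)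
              = C (γ ^ t) * ∏ j ∈ Finset.Ico 0 (i₀ + 1), G j := by
            rw [hL0, Nat.add_zero, Finset.prod_eq_prod_Ico_succ_bot (by omega : 0 < i₀ + 1) G]
          rwa [heq] at this
        | succ k ihk =>
          intro hk1
          have hk : k ≤ i₀ := by omega
          have hXk : C (γ ^ t) * ∏ j ∈ Finset.Ico k (i₀ + 1), G j ∈ I := ihk hk
          obtain ⟨e, he⟩ := hGf k
          have hcop : IsCoprime (e.map φ) ((G k).map φ) := by
            have : Squarefree ((G k).map φ * e.map φ) := by
              rw [← Polynomial.map_mul, ← he]; exact hfsq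
            exact (sqfree_coprime this).symm
          obtain ⟨p, q, c, hpqc⟩ := bezout e (G k) hcop
          obtain ⟨r, hr⟩ := Nat.exists_eq_add_of_le ((hLmono (k+1) i₀ hk1).trans ht)
          -- W ∈ I
          have hW : C (γ ^ t) * (∏ j ∈ Finset.Ico (k + 1) (i₀ + 1), G j) * e ∈ I := by
            have hid : h * (C (γ ^ r) * (∏ j ∈ Finset.Ico (k + 2) (i₀ + 1), G j) * e)
                = ∑ i ∈ Finset.range (u + 1),
                    C (γ ^ (r + L i)) * (G i * ((∏ j ∈ Finset.Ico (k + 2) (i₀ + 1), G j) * e)) := by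
              rw [hh, Finset.sum_mul]
              refine Finset.sum_congr rfl fun i _ => ?_
              rw [pow_add, C_mul]; ring
            have habs : ∀ i ∈ (Finset.range (u + 1)).erase (k + 1),
                C (γ ^ (r + L i)) * (G i * ((∏ j ∈ Finset.Ico (k + 2) (i₀ + 1), G j) * e)) ∈ I := by
              intro i hi
              have hiu : i ≤ u := Nat.lt_succ_iff.mp (Finset.mem_range.mp (Finset.mem_of_mem_erase hi))
              have hine : i ≠ k + 1 := Finset.ne_of_mem_erase hi
              rcases Nat.lt_or_ge i (k + 1) with hik | hik
              · -- small i : multiple of f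
                obtain ⟨d, hd⟩ := hGdvd i k (by omega)
                have : C (γ ^ (r + L i)) * (G i * ((∏ j ∈ Finset.Ico (k + 2) (i₀ + 1), G j) * e))
                    = C (γ ^ (r + L i)) * d * (∏ j ∈ Finset.Ico (k + 2) (i₀ + 1), G j) * f := by
                  rw [he, hd]; ring
                rw [this]
                exact Ideal.mul_mem_left _ _ hfI
              · -- large i : absorb by IH
                have hik2 : k + 2 ≤ i := by omega
                have hLk1i : L (k + 1) + 1 ≤ L i := hLlt (k+1) i (by omega) hiu
                have : C (γ ^ (r + L i)) * G i ∈ I :=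
                  IH (r + L i) i hiu (by omega) (by omega)
                have h2 : C (γ ^ (r + L i)) * (G i * ((∏ j ∈ Finset.Ico (k + 2) (i₀ + 1), G j) * e))
                    = ((∏ j ∈ Finset.Ico (k + 2) (i₀ + 1), G j) * e) * (C (γ ^ (r + L i)) * G i) := by
                  ring
                rw [h2]
                exact Ideal.mul_mem_left _ _ this
            have hk1mem : k + 1 ∈ Finset.range (u + 1) := Finset.mem_range.mpr (by omega)
            have := extract _ (k + 1) hk1mem (by rw [← hid]; exact Ideal.mul_mem_right _ _ hhI) habs
            have heq : C (γ ^ (r + L (k + 1))) * (G (k + 1) * ((∏ j ∈ Finset.Ico (k + 2) (i₀ + 1), G j) * e))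
                = C (γ ^ t) * (∏ j ∈ Finset.Ico (k + 1) (i₀ + 1), G j) * e := by
              rw [Finset.prod_eq_prod_Ico_succ_bot (by omega : k + 1 < i₀ + 1) G,
                show r + L (k + 1) = t by omega]
              ring
            rwa [heq] at this
          -- combine with Bezout
          apply unit_cancel c
          have hcomb : C (γ ^ t) * (∏ j ∈ Finset.Ico (k + 1) (i₀ + 1), G j) * (1 - C γ * c)
              = p * (C (γ ^ t) * (∏ j ∈ Finset.Ico (k + 1) (i₀ + 1), G j) * e)
                + q * (C (γ ^ t) * ∏ j ∈ Finset.Ico k (i₀ + 1), G j) := by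
            rw [Finset.prod_eq_prod_Ico_succ_bot (by omega : k < i₀ + 1) G, ← hpqc]
            ring
          rw [hcomb]
          exact Ideal.add_mem _ (Ideal.mul_mem_left _ _ hW) (Ideal.mul_mem_left _ _ hXk)
      have := inner i₀ le_rfl
      rwa [Nat.Ico_succ_singleton, Finset.prod_singleton] at this
  -- relate the Fin-sum to h
  have hsum : (∑ i : Fin (u + 1), C (γ ^ lam i) * g i) = h := by
    rw [hh, ← Fin.sum_univ_eq_sum_range (fun i => C (γ ^ L i) * G i) (u + 1)]
    exact Finset.sum_congr rfl fun i _ => by rw [hLi i, hGi i]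
  rw [hsum]
  apply le_antisymm
  · rw [Ideal.span_le]
    rintro x ⟨i, rfl⟩
    have hmem : C (γ ^ lam i) * g i ∈ I := by
      have := main s (lam i) ↑i (Nat.lt_succ_iff.mp i.isLt) (le_of_eq (hLi i)) (by omega)
      rwa [hGi i] at this
    rw [hI, Ideal.span_insert, Submodule.mem_sup] at hmem
    obtain ⟨y, hy, z, hz, hyz⟩ := hmem
    rw [Ideal.mem_span_singleton] at hy hz
    obtain ⟨a, rfl⟩ := hy
    obtain ⟨b, rfl⟩ := hz
    rw [SetLike.mem_coe, Ideal.mem_span_singleton]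
    refine ⟨AdjoinRoot.mk f a, ?_⟩
    show AdjoinRoot.mk f (C (γ ^ lam i) * g i) = AdjoinRoot.mk f h * AdjoinRoot.mk f a
    rw [← hyz]
    simp only [map_add, map_mul, AdjoinRoot.mk_self]
    ring
  · rw [Ideal.span_le, Set.singleton_subset_iff, SetLike.mem_coe]
    rw [map_sum]
    refine Ideal.sum_mem _ fun i hi => ?_
    rw [hLi' i (Finset.mem_range.mp hi), hGi' i (Finset.mem_range.mp hi)]
    exact Ideal.subset_span ⟨⟨i, Finset.mem_range.mp hi⟩, rfl⟩
end
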